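/- Let R be a finite commutative ring, G a finite group of order n with a fixed listing g_1,…,g_n, and v ∈ RG. Then the dual code C(v)^⊥ is a G-code; that is, Ψ^{-1}(C(v)^⊥) is a left ideal of the group ring RG. -/

import Mathlib

open MonoidAlgebra Matrix

section Defs

variable {R : Type} [CommRing R] {G : Type} [Group G] {n : ℕ}

/-- The matrix `σ(v)` given a listing `g : Fin n ≃ G`: `σ(v)_{ij} = α_{g_i⁻¹ g_j}`. -/
def sigmaMat (g : Fin n ≃ G) (v : MonoidAlgebra R G) : Matrix (Fin n) (Fin n) R :=
  fun i j => v.coeff ((g i)⁻¹ * g j)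

/-- The code `C(v)`: the row span of `σ(v)`. -/
def codeOf (g : Fin n ≃ G) (v : MonoidAlgebra R G) : Submodule R (Fin n → R) :=
  Submodule.span R (Set.range (sigmaMat g v))

/-- The canonical map `Ψ : RG → Rⁿ`. -/
def Psi (g : Fin n ≃ G) (v : MonoidAlgebra R G) : Fin n → R := fun i => v.coeff (g i)

/-- The canonical involution `v ↦ vᵀ`, sending `Σ αᵢ gᵢ` to `Σ αᵢ gᵢ⁻¹`. -/
def transposeElt (v : MonoidAlgebra R G) : MonoidAlgebra R G :=
  MonoidAlgebra.ofCoeff (Finsupp.equivMapDomain (Equiv.inv G) v.coeff)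

/-- The dual code of a set of vectors w.r.t. the standard inner product. -/
def dualCode {m : ℕ} (C : Set (Fin m → R)) : Submodule R (Fin m → R) where
  carrier := {x | ∀ y ∈ C, ∑ i, x i * y i = 0}
  add_mem' := by
    intro a b ha hb y hy
    have h : ∑ i, (a + b) i * y i = (∑ i, a i * y i) + ∑ i, b i * y i := by
      rw [← Finset.sum_add_distrib]
      simp [add_mul]
    rw [h, ha y hy, hb y hy, add_zero]
  zero_mem' := by intro y hy; simp
  smul_mem' := by
    intro c x hx y hy
    have h : ∑ i, (c • x) i * y i = c * ∑ i, x i * y i := by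
      rw [Finset.mul_sum]
      simp [mul_assoc]
    rw [h, hx y hy, mul_zero]

/-- A set of group-ring elements is a left ideal if it is the underlying set of a
left `RG`-submodule of `RG`. -/
def IsLeftIdeal (S : Set (MonoidAlgebra R G)) : Prop :=
  ∃ I : Submodule (MonoidAlgebra R G) (MonoidAlgebra R G), (I : Set (MonoidAlgebra R G)) = S

/-- The right annihilator of a set in the group ring. -/
def rAnn (S : Set (MonoidAlgebra R G)) : Set (MonoidAlgebra R G) :=
  {w | ∀ u ∈ S, u * w = 0}

/-- `I(v) = Ψ⁻¹(C(v))` as a set. -/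
def Iset (g : Fin n ≃ G) (v : MonoidAlgebra R G) : Set (MonoidAlgebra R G) :=
  Psi g ⁻¹' (codeOf g v : Set (Fin n → R))

end Defs


section Aux

variable {R : Type} [CommRing R] {G : Type} [Group G] {n : ℕ}

/-- The left annihilator of an element, as a left ideal. -/
def leftAnn (u : MonoidAlgebra R G) :
    Submodule (MonoidAlgebra R G) (MonoidAlgebra R G) where
  carrier := {w | w * u = 0}
  add_mem' := by
    intro a b ha hb
    simp only [Set.mem_setOf_eq] at *
    rw [add_mul, ha, hb, add_zero]
  zero_mem' := zero_mul u
  smul_mem' := by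
    intro c w hw
    simp only [Set.mem_setOf_eq, smul_eq_mul] at *
    rw [mul_assoc, hw, mul_zero]

lemma transposeElt_apply (v : MonoidAlgebra R G) (a : G) :
    (transposeElt v).coeff a = v.coeff a⁻¹ := rfl

lemma mul_apply_fintype [Fintype G] (w u : MonoidAlgebra R G) (x : G) :
    (w * u).coeff x = ∑ a : G, w.coeff a * u.coeff (a⁻¹ * x) := by
  rw [MonoidAlgebra.coeff_mul_apply_left]
  exact Finsupp.sum_fintype _ _ (fun a => zero_mul _)

lemma key (g : Fin n ≃ G) [Fintype G] (v w : MonoidAlgebra R G) (i : Fin n) :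
    ∑ j, Psi g w j * sigmaMat g v i j = (w * transposeElt v).coeff (g i) := by
  rw [mul_apply_fintype]
  rw [← Equiv.sum_comp g (fun a => w.coeff a * (transposeElt v).coeff (a⁻¹ * g i))]
  apply Finset.sum_congr rfl
  intro j _
  simp [Psi, sigmaMat, transposeElt_apply, _root_.mul_inv_rev]

end Aux

/-- the dual code `C(v)^⊥` is a `G`-code, i.e. `Ψ⁻¹(C(v)^⊥)` is a left
ideal of the group ring `RG`. -/
theorem dual_code_is_G_code (R : Type) [CommRing R] [Fintype R] (G : Type) [Group G]
    [Fintype G] {n : ℕ} (g : Fin n ≃ G) (v : MonoidAlgebra R G) :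
    IsLeftIdeal (Psi g ⁻¹'
      (dualCode (codeOf g v : Set (Fin n → R)) : Set (Fin n → R))) := by
  refine ⟨leftAnn (transposeElt v), ?_⟩
  ext w
  constructor
  · -- w * vᵀ = 0 → w ∈ Ψ⁻¹(C(v)^⊥)
    intro hw
    have hw' : w * transposeElt v = 0 := hw
    intro y hy
    induction hy using Submodule.span_induction with
    | mem y hy =>
      obtain ⟨i, rfl⟩ := hy
      rw [key g v w i, hw']
      rfl
    | zero => simp
    | add y z _ _ hy hz =>
      have : ∑ i, Psi g w i * (y + z) i
          = (∑ i, Psi g w i * y i) + ∑ i, Psi g w i * z i := by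
        rw [← Finset.sum_add_distrib]; simp [mul_add]
      rw [this, hy, hz, add_zero]
    | smul c y _ hy =>
      have : ∑ i, Psi g w i * (c • y) i = c * ∑ i, Psi g w i * y i := by
        rw [Finset.mul_sum]
        apply Finset.sum_congr rfl
        intro i _
        simp [Pi.smul_apply, smul_eq_mul]; ring
      rw [this, hy, mul_zero]
  · -- w ∈ Ψ⁻¹(C(v)^⊥) → w * vᵀ = 0
    intro hw
    show w * transposeElt v = 0
    ext x
    have hx : (w * transposeElt v).coeff (g (g.symm x)) = 0 := by
      rw [← key g v w (g.symm x)]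
      exact hw (sigmaMat g v (g.symm x))
        (Submodule.subset_span ⟨g.symm x, rfl⟩)
    simpa using hx
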